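/- Let f:ℕ→ℕ be defined by f(n)=⌊φn⌋+1 if n∈A and f(n)=⌊(φ−1)n⌋ if n∈B, and let j:ℕ→ℕ be defined by j(n)=⌊φn⌋−1 if n∈R_{1,0}, j(n)=⌊(φ−1)n⌋+1 if n∈R_{1,1}, and j(n)=⌊φn⌋+1 if n∈R_{2,0}. Then f∘j = j⁻¹∘f; equivalently, j(f(j(n))) = f(n) for all n∈ℕ. (Consequently, the group of permutations of ℕ generated by f and j is an infinite dihedral group.) -/

import Mathlib

/-!
Everything is governed by `u = {nφ}`: `n ∈ A` iff `u > 2 - φ`, `n ∈ B = R_{1,0}` iff `u < 2 - φ`,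
and `n ∈ R_{1,1}` iff `{(n+1)φ} < 2 - φ`. Because `φ² = φ + 1`, for `m = ⌊nφ⌋ + c` one has
`mφ = ⌊nφ⌋ + n + (cφ - u(φ - 1))`, and similarly for `m = ⌊nφ⌋ - n + c` and `m = n + c`, so the
floor and the fractional part of `mφ` for every value occurring in `j(f(j n))` are explicit in `u`.
The identity `j(f(j n)) = f n` then reduces to a check on each of the three ranges of `u` cut out by
the irrational points `2 - φ` and `2(2 - φ)`.
-/

/-- The golden ratio φ = (1 + √5)/2. -/
noncomputable def phi : ℝ := (1 + Real.sqrt 5) / 2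

/-- The lower Wythoff sequence a(n) = ⌊nφ⌋. -/
noncomputable def wa (n : ℕ) : ℕ := ⌊(n : ℝ) * phi⌋₊

/-- The upper Wythoff sequence b(n) = ⌊nφ²⌋. -/
noncomputable def wb (n : ℕ) : ℕ := ⌊(n : ℝ) * phi ^ 2⌋₊

/-- A = range of the lower Wythoff sequence. -/
def WA : Set ℕ := {m | ∃ n : ℕ, 0 < n ∧ wa n = m}

/-- B = range of the upper Wythoff sequence. -/
def WB : Set ℕ := {m | ∃ n : ℕ, 0 < n ∧ wb n = m}

/-- f_{i,j}(n) = F(i+1)·a(n) + F(i)·n − j. -/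
noncomputable def fij (i : ℕ) (j : ℤ) (n : ℕ) : ℤ :=
  (Nat.fib (i + 1) : ℤ) * wa n + (Nat.fib i : ℤ) * n - j

/-- R_{i,j} = { f_{i,j}(n) : n ∈ ℕ, n ≥ 1 }. -/
def R (i : ℕ) (j : ℤ) : Set ℤ := {m | ∃ n : ℕ, 0 < n ∧ fij i j n = m}

open scoped Classical in
/-- f(n) = ⌊φn⌋+1 if n ∈ A, and f(n) = ⌊(φ−1)n⌋ if n ∈ B. -/
noncomputable def f (n : ℕ) : ℕ :=
  if n ∈ WA then wa n + 1 else ⌊(phi - 1) * (n : ℝ)⌋₊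

open scoped Classical in
/-- j(n) = ⌊φn⌋−1 if n ∈ R_{1,0}, ⌊(φ−1)n⌋+1 if n ∈ R_{1,1}, ⌊φn⌋+1 if n ∈ R_{2,0}. -/
noncomputable def jmap (n : ℕ) : ℕ :=
  if (n : ℤ) ∈ R 1 0 then wa n - 1
  else if (n : ℤ) ∈ R 1 1 then ⌊(phi - 1) * (n : ℝ)⌋₊ + 1
  else wa n + 1

open Real

lemma phi_eq_goldenRatio : phi = goldenRatio := rfl

lemma phi_sq : phi ^ 2 = phi + 1 := goldenRatio_sq

lemma phi_pos : 0 < phi := goldenRatio_pos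

lemma one_lt_phi : 1 < phi := one_lt_goldenRatio

lemma phi_lt_two : phi < 2 := goldenRatio_lt_two

lemma three_halves_lt_phi : 3 / 2 < phi := by
  nlinarith [phi_sq, one_lt_phi]

noncomputable def phiFract (m : ℕ) : ℝ := Int.fract ((m : ℝ) * phi)

lemma phiFract_nonneg (m : ℕ) : 0 ≤ phiFract m := Int.fract_nonneg _

lemma phiFract_lt_one (m : ℕ) : phiFract m < 1 := Int.fract_lt_one _

lemma natCast_wa (m : ℕ) : (wa m : ℝ) = m * phi - phiFract m := by
  rw [wa, natCast_floor_eq_intCast_floor (mul_nonneg m.cast_nonneg phi_pos.le), phiFract,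
    ← Int.self_sub_fract]

lemma natCast_natFloor_eq {x v : ℝ} {z : ℤ} (hx : 0 ≤ x) (hv0 : 0 ≤ v) (hv1 : v < 1)
    (h : x = z + v) : (⌊x⌋₊ : ℤ) = z := by
  rw [Int.natCast_floor_eq_floor hx, Int.floor_eq_iff]
  constructor <;> linarith

lemma wa_eq_and_phiFract_eq {m : ℕ} {z : ℤ} {v : ℝ} (hv0 : 0 ≤ v) (hv1 : v < 1)
    (h : (m : ℝ) * phi = z + v) : (wa m : ℤ) = z ∧ phiFract m = v :=
  ⟨natCast_natFloor_eq (mul_nonneg m.cast_nonneg phi_pos.le) hv0 hv1 h,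
    Int.fract_eq_iff.2 ⟨hv0, hv1, z, by linarith⟩⟩

lemma phiFract_ne_mul_two_sub_phi (m k : ℕ) (h : 0 < m + k) : phiFract m ≠ k * (2 - phi) := by
  intro hmk
  apply (goldenRatio_irrational.natCast_mul (m := m + k) (by omega)).ne_int (wa m + 2 * k)
  rw [← phi_eq_goldenRatio]
  push_cast
  linear_combination hmk - natCast_wa m

lemma phiFract_pos {m : ℕ} (hm : 0 < m) : 0 < phiFract m :=
  (phiFract_nonneg m).lt_of_ne <| by simpa using (phiFract_ne_mul_two_sub_phi m 0 hm).symm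

lemma le_wa (m : ℕ) : m ≤ wa m :=
  Nat.le_floor <| le_mul_of_one_le_right m.cast_nonneg one_lt_goldenRatio.le

lemma wa_lt_two_mul {m : ℕ} (hm : 0 < m) : wa m < 2 * m := by
  have : (wa m : ℝ) < (2 * m : ℕ) := by
    push_cast
    nlinarith [natCast_wa m, phiFract_nonneg m, phi_lt_two, (Nat.cast_pos (α := ℝ)).2 hm]
  exact_mod_cast this

lemma wa_succ_and_phiFract_succ {m : ℕ} (h : 2 - phi < phiFract m) :
    (wa (m + 1) : ℤ) = wa m + 2 ∧ phiFract (m + 1) = phiFract m + phi - 2 :=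
  wa_eq_and_phiFract_eq (by linarith) (by linarith [phiFract_lt_one m, phi_lt_two])
    (by push_cast; rw [natCast_wa]; ring)

lemma mem_WA_iff (m : ℕ) : m ∈ WA ↔ 2 - phi < phiFract m := by
  have := one_lt_phi
  have := phi_lt_two
  constructor
  · rintro ⟨k, hk, rfl⟩
    have hv0 := phiFract_pos hk
    have hv1 := phiFract_lt_one k
    obtain ⟨-, hu⟩ := wa_eq_and_phiFract_eq (m := wa k) (z := wa k + k - 1)
      (v := 1 - phiFract k * (phi - 1)) (by nlinarith) (by nlinarith)
      (by push_cast; rw [natCast_wa]; linear_combination k * phi_sq)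
    rw [hu]
    nlinarith
  · intro hu
    have hu1 := phiFract_lt_one m
    -- `k = ⌈m / φ⌉ = ⌈m (φ - 1)⌉`, the only candidate for `⌊kφ⌋ = m`
    obtain ⟨k, hk⟩ : ∃ k : ℕ, (k : ℤ) = wa m - m + 1 := ⟨wa m - m + 1, by have := le_wa m; omega⟩
    have hkr : (k : ℝ) = m * phi - phiFract m - m + 1 := by
      rw [← natCast_wa]; exact_mod_cast hk
    obtain ⟨hwk, -⟩ := wa_eq_and_phiFract_eq (m := k) (z := m) (v := (1 - phiFract m) * phi)
      (by nlinarith)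
      (by nlinarith [phi_sq, mul_pos (by linarith : 0 < phiFract m - (2 - phi)) phi_pos])
      (by rw [hkr]; linear_combination m * phi_sq)
    exact ⟨k, by have := le_wa m; omega, by exact_mod_cast hwk⟩

lemma exists_wa_add_self_eq_iff {m : ℕ} (hm : 0 < m) :
    (∃ k, 0 < k ∧ (wa k : ℤ) + k = m) ↔ phiFract m < 2 - phi := by
  have := one_lt_phi
  have := phi_lt_two
  constructor
  · rintro ⟨k, -, hkm⟩
    have hv0 := phiFract_nonneg k
    have hv1 := phiFract_lt_one k
    have hmr : (m : ℝ) = k * phi - phiFract k + k := by rw [← natCast_wa]; exact_mod_cast hkm.symm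
    obtain ⟨-, hu⟩ := wa_eq_and_phiFract_eq (m := m) (z := m + wa k)
      (v := phiFract k * (2 - phi)) (by nlinarith) (by nlinarith)
      (by push_cast; rw [natCast_wa, hmr]; linear_combination k * phi_sq)
    rw [hu]
    nlinarith
  · intro hu
    have hu0 := phiFract_nonneg m
    -- `k = ⌈m / φ²⌉ = ⌈m (2 - φ)⌉`, the only candidate for `⌊kφ²⌋ = m`
    obtain ⟨k, hk⟩ : ∃ k : ℕ, (k : ℤ) = 2 * m - wa m :=
      ⟨2 * m - wa m, by have := wa_lt_two_mul hm; omega⟩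
    have hkr : (k : ℝ) = 2 * m - (m * phi - phiFract m) := by
      rw [← natCast_wa]; exact_mod_cast hk
    obtain ⟨hwk, -⟩ := wa_eq_and_phiFract_eq (m := k) (z := wa m - m) (v := phiFract m * phi ^ 2)
      (by positivity) (by nlinarith [phi_sq, mul_lt_mul_of_pos_right hu (pow_pos phi_pos 2)])
      (by push_cast; rw [hkr, natCast_wa]; linear_combination (-m - phiFract m) * phi_sq)
    exact ⟨k, by have := wa_lt_two_mul hm; omega, by omega⟩

lemma natCast_mem_R_one_iff (m : ℕ) (j : ℤ) :
    (m : ℤ) ∈ R 1 j ↔ ∃ k, 0 < k ∧ (wa k : ℤ) + k = m + j := by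
  simp only [R, fij, Set.mem_ofPred_eq, Nat.reduceAdd, Nat.fib_one, Nat.fib_two, Nat.cast_one,
    one_mul]
  exact exists_congr fun k => and_congr_right fun _ => by omega

lemma natCast_mem_R_one_zero_iff {m : ℕ} (hm : 0 < m) :
    (m : ℤ) ∈ R 1 0 ↔ phiFract m < 2 - phi := by
  simpa using (natCast_mem_R_one_iff m 0).trans (exists_wa_add_self_eq_iff hm)

lemma natCast_mem_R_one_one_iff (m : ℕ) : (m : ℤ) ∈ R 1 1 ↔ phiFract (m + 1) < 2 - phi := by
  rw [natCast_mem_R_one_iff, ← exists_wa_add_self_eq_iff m.succ_pos]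
  push_cast
  rfl

lemma natCast_floor_phi_sub_one_mul (m : ℕ) : (⌊(phi - 1) * m⌋₊ : ℤ) = wa m - m :=
  natCast_natFloor_eq (mul_nonneg (by linarith [one_lt_phi]) m.cast_nonneg)
    (phiFract_nonneg m) (phiFract_lt_one m) (by push_cast; rw [natCast_wa]; ring)

lemma f_of_two_sub_phi_lt {m : ℕ} (h : 2 - phi < phiFract m) : f m = wa m + 1 :=
  if_pos ((mem_WA_iff m).2 h)

lemma natCast_f_of_lt_two_sub_phi {m : ℕ} (h : phiFract m < 2 - phi) : (f m : ℤ) = wa m - m := by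
  have hA : m ∉ WA := by rw [mem_WA_iff]; linarith
  simp only [f, if_neg hA]
  exact natCast_floor_phi_sub_one_mul m

lemma natCast_jmap_of_lt_two_sub_phi {m : ℕ} (hm : 0 < m) (h : phiFract m < 2 - phi) :
    (jmap m : ℤ) = wa m - 1 := by
  simp only [jmap, if_pos ((natCast_mem_R_one_zero_iff hm).2 h)]
  have := le_wa m
  omega

lemma natCast_jmap_of_mem_Ioo {m : ℕ} (hm : 0 < m) (h1 : 2 - phi < phiFract m)
    (h2 : phiFract m < 2 * (2 - phi)) : (jmap m : ℤ) = wa m - m + 1 := by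
  have h10 : (m : ℤ) ∉ R 1 0 := by rw [natCast_mem_R_one_zero_iff hm]; linarith
  have h11 : (m : ℤ) ∈ R 1 1 := by
    rw [natCast_mem_R_one_one_iff, (wa_succ_and_phiFract_succ h1).2]; linarith
  simp only [jmap, if_neg h10, if_pos h11]
  push_cast
  rw [natCast_floor_phi_sub_one_mul]

lemma jmap_of_two_mul_two_sub_phi_lt {m : ℕ} (hm : 0 < m) (h : 2 * (2 - phi) < phiFract m) :
    jmap m = wa m + 1 := by
  have h1 : 2 - phi < phiFract m := by linarith [phi_lt_two]
  have h10 : (m : ℤ) ∉ R 1 0 := by rw [natCast_mem_R_one_zero_iff hm]; linarith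
  have h11 : (m : ℤ) ∉ R 1 1 := by
    rw [natCast_mem_R_one_one_iff, (wa_succ_and_phiFract_succ h1).2]; linarith
  simp only [jmap, if_neg h10, if_neg h11]

lemma jmap_f_jmap_of_lt_two_sub_phi {n : ℕ} (hn : 0 < n) (h : phiFract n < 2 - phi) :
    jmap (f (jmap n)) = f n := by
  -- with `a = ⌊nφ⌋`, the orbit is `n ↦ a - 1 ↦ n - 1 ↦ a - n = f n`
  have := one_lt_phi
  have := three_halves_lt_phi
  have := phi_lt_two
  have hu0 := phiFract_pos hn
  obtain ⟨m, hm⟩ : ∃ m : ℕ, (m : ℤ) = wa n - 1 := ⟨wa n - 1, by have := le_wa n; omega⟩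
  have hmr : (m : ℝ) = n * phi - phiFract n - 1 := by rw [← natCast_wa]; exact_mod_cast hm
  obtain ⟨hwm, hum⟩ := wa_eq_and_phiFract_eq (m := m) (z := wa n + n - 2)
    (v := 2 - phi - phiFract n * (phi - 1)) (by nlinarith [phiFract_lt_one n]) (by nlinarith)
    (by push_cast; rw [hmr, natCast_wa]; linear_combination n * phi_sq)
  have hfm := natCast_f_of_lt_two_sub_phi (m := m) (by rw [hum]; nlinarith)
  obtain ⟨k, rfl⟩ : ∃ k, n = k + 1 := ⟨n - 1, by omega⟩
  obtain ⟨hwk, huk⟩ := wa_eq_and_phiFract_eq (m := k) (z := wa (k + 1) - 2)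
    (v := phiFract (k + 1) + 2 - phi) (by linarith) (by linarith)
    (by push_cast; rw [natCast_wa]; push_cast; ring)
  have hk : 0 < k := Nat.pos_of_ne_zero (by
    rintro rfl
    rw [show phiFract 0 = 0 by simp [phiFract]] at huk
    linarith)
  have hjk := natCast_jmap_of_mem_Ioo hk (by rw [huk]; linarith) (by rw [huk]; linarith)
  have hjn := natCast_jmap_of_lt_two_sub_phi hn h
  have hfn := natCast_f_of_lt_two_sub_phi h
  have hjn' : jmap (k + 1) = m := by omega
  have hfm' : f m = k := by omega
  rw [hjn', hfm']
  omega

lemma jmap_f_jmap_of_mem_Ioo {n : ℕ} (hn : 0 < n) (h1 : 2 - phi < phiFract n)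
    (h2 : phiFract n < 2 * (2 - phi)) : jmap (f (jmap n)) = f n := by
  -- with `a = ⌊nφ⌋`, the orbit is `n ↦ a - n + 1 ↦ n + 1 ↦ a + 1 = f n`
  have := one_lt_phi
  have := phi_lt_two
  have hu1 := phiFract_lt_one n
  obtain ⟨m, hm⟩ : ∃ m : ℕ, (m : ℤ) = wa n - n + 1 := ⟨wa n - n + 1, by have := le_wa n; omega⟩
  have hmr : (m : ℝ) = n * phi - phiFract n - n + 1 := by rw [← natCast_wa]; exact_mod_cast hm
  obtain ⟨hwm, hum⟩ := wa_eq_and_phiFract_eq (m := m) (z := n) (v := (1 - phiFract n) * phi)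
    (by nlinarith)
    (by nlinarith [phi_sq, mul_pos (by linarith : 0 < phiFract n - (2 - phi)) phi_pos])
    (by rw [hmr]; linear_combination n * phi_sq)
  have hfm := f_of_two_sub_phi_lt (m := m)
    (by rw [hum]; nlinarith [phi_sq, mul_lt_mul_of_pos_right h2 phi_pos])
  obtain ⟨hwn, hun⟩ := wa_succ_and_phiFract_succ h1
  have hjn1 := natCast_jmap_of_lt_two_sub_phi (m := n + 1) (by omega) (by rw [hun]; linarith)
  have hjn := natCast_jmap_of_mem_Ioo hn h1 h2
  have hjn' : jmap n = m := by omega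
  rw [hjn', hfm, f_of_two_sub_phi_lt h1, (by omega : wa m + 1 = n + 1)]
  omega

lemma jmap_f_jmap_of_two_mul_two_sub_phi_lt {n : ℕ} (hn : 0 < n)
    (h : 2 * (2 - phi) < phiFract n) : jmap (f (jmap n)) = f n := by
  -- with `a = ⌊nφ⌋`, the orbit is `n ↦ a + 1 ↦ n ↦ a + 1 = f n`
  have := one_lt_phi
  have := phi_lt_two
  have hu1 := phiFract_lt_one n
  have h1 : 2 - phi < phiFract n := by linarith
  obtain ⟨hwm, hum⟩ := wa_eq_and_phiFract_eq (m := wa n + 1) (z := wa n + n + 1)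
    (v := (1 - phiFract n) * (phi - 1)) (by nlinarith) (by nlinarith)
    (by push_cast; rw [natCast_wa]; linear_combination n * phi_sq)
  have hfm := natCast_f_of_lt_two_sub_phi (m := wa n + 1)
    (by rw [hum]; nlinarith [phi_sq, mul_lt_mul_of_pos_right h1 (by linarith : (0 : ℝ) < phi - 1)])
  have hjn := jmap_of_two_mul_two_sub_phi_lt hn h
  rw [hjn, f_of_two_sub_phi_lt h1, (by push_cast at hfm; omega : f (wa n + 1) = n), hjn]

/-- f ∘ j = j⁻¹ ∘ f, equivalently j(f(j(n))) = f(n) for every n ∈ ℕ. -/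
theorem stmt_14 : ∀ n : ℕ, 0 < n → jmap (f (jmap n)) = f n := by
  intro n hn
  have h1 : phiFract n ≠ 2 - phi := by simpa using phiFract_ne_mul_two_sub_phi n 1 (by omega)
  have h2 : phiFract n ≠ 2 * (2 - phi) := by
    simpa using phiFract_ne_mul_two_sub_phi n 2 (by omega)
  rcases h1.lt_or_gt with h1 | h1
  · exact jmap_f_jmap_of_lt_two_sub_phi hn h1
  rcases h2.lt_or_gt with h2 | h2
  · exact jmap_f_jmap_of_mem_Ioo hn h1 h2
  · exact jmap_f_jmap_of_two_mul_two_sub_phi_lt hn h2
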